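/- Let (Ω, 𝓕, P) be a probability space, A : Ω → {0,1}, Y : Ω → ℝ with |Y| ≤ M almost surely, and 𝓖_X ⊆ 𝓕 a sub-σ-algebra. Let π₁ = E[A | 𝓖_X] with π₁ ∈ [1/M, 1 − 1/M] a.s., π₀ = 1 − π₁, and μ₁, μ₀ the 𝓖_X-measurable outcome regressions with μ₁π₁ = E[AY | 𝓖_X] and μ₀π₀ = E[(1−A)Y | 𝓖_X] a.s.; set Δ* := E[μ₁ − μ₀]. Let π̃₁, μ̃₁, μ̃₀ be 𝓖_X-measurable working models with π̃₁ ∈ [1/M, 1 − 1/M] a.s., π̃₀ := 1 − π̃₁, and |μ̃₁|, |μ̃₀| ≤ M a.s. If either (i) π̃₁ = π₁ almost surely, or (ii) μ̃₁ = μ₁ and μ̃₀ = μ₀ almost surely, then the augmented-inverse-probability-weighted functional is unbiased: E[ μ̃₁ − μ̃₀ + A(Y − μ̃₁)/π̃₁ − (1−A)(Y − μ̃₀)/π̃₀ ] = Δ*. -/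

import Mathlib

/-!
Conditionally on `𝓖X` the working models are constants, so by the pull-out property the AIPW
score of arm `a` has conditional mean `μ̃ₐ + (μₐ - μ̃ₐ) πₐ / π̃ₐ`. This is `μₐ` when `π̃ₐ = πₐ`
(which is nonzero by overlap) and also when `μ̃ₐ = μₐ`; taking expectations of the difference of
the two arms gives `Δ*`. Boundedness of `A`, `Y`, `μ̃ₐ` and `1 / π̃ₐ` makes every product
integrable.
-/

open MeasureTheory ProbabilityTheory Filter
open scoped ENNReal

/-- The AIPW score `μ̃ₐ + 1{A = a} (Y - μ̃ₐ) / π̃ₐ` of one treatment arm, with `D = 1{A = a}`,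
working propensity `e' = π̃ₐ` and working regression `μ' = μ̃ₐ`. -/
noncomputable def aipwScore {Ω : Type*} (D Y e' μ' : Ω → ℝ) : Ω → ℝ :=
  fun ω => μ' ω + D ω * (Y ω - μ' ω) / e' ω

section

variable {Ω : Type*} {m mΩ : MeasurableSpace Ω} {P : Measure Ω} {D Y e μ e' μ' : Ω → ℝ}

lemma aipwScore_eq_add_inv_mul :
    aipwScore D Y e' μ' = μ' + (fun ω => (e' ω)⁻¹) * fun ω => D ω * (Y ω - μ' ω) := by
  funext ω; simp only [aipwScore, Pi.add_apply, Pi.mul_apply]; ring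

lemma memLp_top_aipwScore (hD : MemLp D ∞ P) (hY : MemLp Y ∞ P) (hμ' : MemLp μ' ∞ P)
    (he' : MemLp (fun ω => (e' ω)⁻¹) ∞ P) : MemLp (aipwScore D Y e' μ') ∞ P := by
  rw [aipwScore_eq_add_inv_mul]
  exact hμ'.add (((hY.sub hμ').mul' hD (r := ∞)).mul he')

lemma memLp_top_inv_of_one_div_le {M : ℝ} (he' : AEMeasurable e' P) (hM : 0 < M)
    (he'M : ∀ᵐ ω ∂P, 1 / M ≤ e' ω) : MemLp (fun ω => (e' ω)⁻¹) ∞ P := by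
  refine memLp_top_of_bound he'.inv.aestronglyMeasurable M ?_
  filter_upwards [he'M] with ω hω
  have hpos : 0 < e' ω := (one_div_pos.mpr hM).trans_le hω
  rw [Real.norm_eq_abs, abs_inv, abs_of_pos hpos]
  exact inv_le_of_inv_le₀ hM (by rwa [← one_div])

variable [IsFiniteMeasure P]

lemma condExp_one_sub (hm : m ≤ mΩ) (hD : Integrable D P) :
    P[fun ω => 1 - D ω|m] =ᵐ[P] fun ω => 1 - P[D|m] ω := by
  have h := condExp_sub (integrable_const (1 : ℝ)) hD m
  rwa [condExp_const hm] at h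

lemma condExp_mul_sub_ae_eq (hμ'm : Measurable[m] μ')
    (hD : MemLp D ∞ P) (hY : MemLp Y ∞ P) (hμ' : MemLp μ' ∞ P)
    (he : e =ᵐ[P] P[D|m]) (hμ : (fun ω => μ ω * e ω) =ᵐ[P] P[fun ω => D ω * Y ω|m]) :
    P[fun ω => D ω * (Y ω - μ' ω)|m] =ᵐ[P] fun ω => (μ ω - μ' ω) * e ω := by
  have hDY : Integrable (fun ω => D ω * Y ω) P := (hY.mul' hD).integrable le_top
  have hμ'D : Integrable (μ' * D) P := (hD.mul hμ').integrable le_top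
  have hsplit : (fun ω => D ω * (Y ω - μ' ω)) = (fun ω => D ω * Y ω) - μ' * D := by
    funext ω; simp only [Pi.sub_apply, Pi.mul_apply]; ring
  have hpull : P[μ' * D|m] =ᵐ[P] μ' * e :=
    (condExp_mul_of_stronglyMeasurable_left hμ'm.stronglyMeasurable hμ'D
      (hD.integrable le_top)).trans (EventuallyEq.rfl.mul he.symm)
  rw [hsplit]
  filter_upwards [condExp_sub hDY hμ'D m, hμ, hpull] with ω hsub hμω hpullω
  simp only [hsub, Pi.sub_apply, ← hμω, hpullω, Pi.mul_apply]
  ring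

lemma condExp_aipwScore (hm : m ≤ mΩ) (he'm : Measurable[m] e') (hμ'm : Measurable[m] μ')
    (hD : MemLp D ∞ P) (hY : MemLp Y ∞ P) (hμ' : MemLp μ' ∞ P)
    (he' : MemLp (fun ω => (e' ω)⁻¹) ∞ P)
    (he : e =ᵐ[P] P[D|m]) (hμ : (fun ω => μ ω * e ω) =ᵐ[P] P[fun ω => D ω * Y ω|m]) :
    P[aipwScore D Y e' μ'|m] =ᵐ[P] fun ω => μ' ω + (μ ω - μ' ω) * e ω / e' ω := by
  have hr : MemLp (fun ω => D ω * (Y ω - μ' ω)) ∞ P := (hY.sub hμ').mul' hD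
  have hweighted : Integrable ((fun ω => (e' ω)⁻¹) * fun ω => D ω * (Y ω - μ' ω)) P :=
    (hr.mul he').integrable le_top
  have hpull := condExp_mul_of_stronglyMeasurable_left (f := fun ω => (e' ω)⁻¹)
    he'm.inv.stronglyMeasurable hweighted (hr.integrable le_top)
  rw [aipwScore_eq_add_inv_mul]
  filter_upwards [condExp_add (hμ'.integrable le_top) hweighted m, hpull,
    condExp_mul_sub_ae_eq hμ'm hD hY hμ' he hμ] with ω hadd hpullω hrω
  rw [hadd, Pi.add_apply, hpullω, condExp_of_stronglyMeasurable hm hμ'm.stronglyMeasurable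
    (hμ'.integrable le_top), Pi.mul_apply, hrω]
  ring

lemma condExp_aipwScore_ae_eq_of_or (hm : m ≤ mΩ) (he'm : Measurable[m] e')
    (hμ'm : Measurable[m] μ') (hD : MemLp D ∞ P) (hY : MemLp Y ∞ P) (hμ' : MemLp μ' ∞ P)
    (he' : MemLp (fun ω => (e' ω)⁻¹) ∞ P)
    (he : e =ᵐ[P] P[D|m]) (hμ : (fun ω => μ ω * e ω) =ᵐ[P] P[fun ω => D ω * Y ω|m])
    (hdr : (e' =ᵐ[P] e ∧ ∀ᵐ ω ∂P, e ω ≠ 0) ∨ μ' =ᵐ[P] μ) :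
    P[aipwScore D Y e' μ'|m] =ᵐ[P] μ := by
  refine (condExp_aipwScore hm he'm hμ'm hD hY hμ' he' he hμ).trans ?_
  rcases hdr with ⟨he'e, he0⟩ | hμ'μ
  · filter_upwards [he'e, he0] with ω hω h0
    rw [hω, mul_div_cancel_right₀ _ h0]
    ring
  · filter_upwards [hμ'μ] with ω hω
    rw [hω, sub_self, zero_mul, zero_div, add_zero]

end

theorem aipw_double_robustness_general
    {Ω : Type*} (𝓖X : MeasurableSpace Ω) [mF : MeasurableSpace Ω]
    (P : Measure Ω) [IsProbabilityMeasure P]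
    (h𝓖X : 𝓖X ≤ mF)
    (M : ℝ) (hM : 1 < M)
    (A Y : Ω → ℝ)
    (hA : Measurable A) (hAbin : ∀ ω, A ω = 0 ∨ A ω = 1)
    (hYmeas : Measurable Y) (hYbdd : ∀ᵐ ω ∂P, |Y ω| ≤ M)
    (π1 μ1 μ0 : Ω → ℝ)
    (hπ1 : π1 =ᵐ[P] P[A|𝓖X])
    (hoverlap : ∀ᵐ ω ∂P, π1 ω ∈ Set.Icc (1 / M) (1 - 1 / M))
    (hμ1 : (fun ω => μ1 ω * π1 ω) =ᵐ[P] P[fun ω => A ω * Y ω|𝓖X])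
    (hμ0 : (fun ω => μ0 ω * (1 - π1 ω)) =ᵐ[P] P[fun ω => (1 - A ω) * Y ω|𝓖X])
    (πt1 μt1 μt0 : Ω → ℝ)
    (hπt1meas : Measurable[𝓖X] πt1)
    (hπt1b : ∀ᵐ ω ∂P, πt1 ω ∈ Set.Icc (1 / M) (1 - 1 / M))
    (hμt1meas : Measurable[𝓖X] μt1) (hμt0meas : Measurable[𝓖X] μt0)
    (hμt1b : ∀ᵐ ω ∂P, |μt1 ω| ≤ M) (hμt0b : ∀ᵐ ω ∂P, |μt0 ω| ≤ M)
    (hdr : (πt1 =ᵐ[P] π1) ∨ (μt1 =ᵐ[P] μ1 ∧ μt0 =ᵐ[P] μ0)) :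
    ∫ ω, (μt1 ω - μt0 ω + A ω * (Y ω - μt1 ω) / πt1 ω
        - (1 - A ω) * (Y ω - μt0 ω) / (1 - πt1 ω)) ∂P
      = ∫ ω, (μ1 ω - μ0 ω) ∂P := by
  have hMpos : 0 < M := by linarith
  have hπt1 : Measurable πt1 := hπt1meas.mono h𝓖X le_rfl
  have hmemLp {f : Ω → ℝ} (hf : Measurable[𝓖X] f) (hfM : ∀ᵐ ω ∂P, |f ω| ≤ M) :
      MemLp f ∞ P :=
    memLp_top_of_bound (hf.mono h𝓖X le_rfl).aestronglyMeasurable M hfM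
  have hAL : MemLp A ∞ P := memLp_top_of_bound hA.aestronglyMeasurable 1
    (Eventually.of_forall fun ω => by rcases hAbin ω with h | h <;> simp [h])
  have h1AL : MemLp (fun ω => 1 - A ω) ∞ P := (memLp_top_const 1).sub hAL
  have hYL : MemLp Y ∞ P := memLp_top_of_bound hYmeas.aestronglyMeasurable M hYbdd
  have hμt1L := hmemLp hμt1meas hμt1b
  have hμt0L := hmemLp hμt0meas hμt0b
  have hinv1 : MemLp (fun ω => (πt1 ω)⁻¹) ∞ P :=
    memLp_top_inv_of_one_div_le hπt1.aemeasurable hMpos (hπt1b.mono fun _ h => h.1)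
  have hinv0 : MemLp (fun ω => (1 - πt1 ω)⁻¹) ∞ P :=
    memLp_top_inv_of_one_div_le (measurable_const.sub hπt1).aemeasurable hMpos
      (hπt1b.mono fun _ h => by linarith [h.2])
  have hπ0 : (fun ω => 1 - π1 ω) =ᵐ[P] P[fun ω => 1 - A ω|𝓖X] :=
    (hπ1.fun_comp (1 - ·)).trans (condExp_one_sub h𝓖X (hAL.integrable le_top)).symm
  have hpos : ∀ᵐ ω ∂P, π1 ω ≠ 0 ∧ 1 - π1 ω ≠ 0 := hoverlap.mono fun _ h =>
    have := one_div_pos.mpr hMpos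
    ⟨by linarith [h.1], by linarith [h.2]⟩
  have h1 := condExp_aipwScore_ae_eq_of_or h𝓖X hπt1meas hμt1meas hAL hYL hμt1L hinv1 hπ1 hμ1
    (hdr.imp (⟨·, hpos.mono fun _ h => h.1⟩) And.left)
  have h0 := condExp_aipwScore_ae_eq_of_or h𝓖X (measurable_const.sub hπt1meas) hμt0meas
    h1AL hYL hμt0L hinv0 hπ0 hμ0
    (hdr.imp (⟨·.fun_comp (1 - ·), hpos.mono fun _ h => h.2⟩) And.right)
  have hI1 := (memLp_top_aipwScore hAL hYL hμt1L hinv1).integrable le_top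
  have hI0 := (memLp_top_aipwScore h1AL hYL hμt0L hinv0).integrable le_top
  calc _ = ∫ ω, (aipwScore A Y πt1 μt1
        - aipwScore (fun ω => 1 - A ω) Y (fun ω => 1 - πt1 ω) μt0) ω ∂P := by
        congr 1; funext ω; simp only [aipwScore, Pi.sub_apply]; ring
    _ = ∫ ω, (μ1 ω - μ0 ω) ∂P := by
      rw [← integral_condExp h𝓖X]
      exact integral_congr_ae ((condExp_sub hI1 hI0 _).trans (h1.sub h0))

/-- **Double robustness of the AIPW population functional.**
With true propensity score `π₁ = E[A ∣ 𝓖X]` (overlap `π₁ ∈ [1/M, 1−1/M]` a.s.) and true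
outcome regressions `μₐ` with `μₐπₐ = E[1{A=a}Y ∣ 𝓖X]` a.s., and working `𝓖X`-measurable
models `π̃₁ ∈ [1/M, 1−1/M]`, `|μ̃₁|, |μ̃₀| ≤ M` a.s., if either `π̃₁ = π₁` a.s. or
(`μ̃₁ = μ₁` and `μ̃₀ = μ₀` a.s.), then
`E[μ̃₁ − μ̃₀ + A(Y−μ̃₁)/π̃₁ − (1−A)(Y−μ̃₀)/π̃₀] = Δ* = E[μ₁ − μ₀]`. -/
theorem aipw_double_robustness
    {Ω : Type*} (𝓖X : MeasurableSpace Ω) [mF : MeasurableSpace Ω]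
    (P : Measure Ω) [IsProbabilityMeasure P]
    (h𝓖X : 𝓖X ≤ mF)
    (M : ℝ) (hM : 1 < M)
    (A Y : Ω → ℝ)
    (hA : Measurable A) (hAbin : ∀ ω, A ω = 0 ∨ A ω = 1)
    (hYmeas : Measurable Y) (hYbdd : ∀ᵐ ω ∂P, |Y ω| ≤ M)
    (π1 μ1 μ0 : Ω → ℝ)
    (hπ1meas : Measurable[𝓖X] π1) (hπ1 : π1 =ᵐ[P] P[A|𝓖X])
    (hoverlap : ∀ᵐ ω ∂P, π1 ω ∈ Set.Icc (1 / M) (1 - 1 / M))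
    (hμ1meas : Measurable[𝓖X] μ1) (hμ0meas : Measurable[𝓖X] μ0)
    (hμ1 : (fun ω => μ1 ω * π1 ω) =ᵐ[P] P[fun ω => A ω * Y ω|𝓖X])
    (hμ0 : (fun ω => μ0 ω * (1 - π1 ω)) =ᵐ[P] P[fun ω => (1 - A ω) * Y ω|𝓖X])
    (πt1 μt1 μt0 : Ω → ℝ)
    (hπt1meas : Measurable[𝓖X] πt1)
    (hπt1b : ∀ᵐ ω ∂P, πt1 ω ∈ Set.Icc (1 / M) (1 - 1 / M))
    (hμt1meas : Measurable[𝓖X] μt1) (hμt0meas : Measurable[𝓖X] μt0)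
    (hμt1b : ∀ᵐ ω ∂P, |μt1 ω| ≤ M) (hμt0b : ∀ᵐ ω ∂P, |μt0 ω| ≤ M)
    (hdr : (πt1 =ᵐ[P] π1) ∨ (μt1 =ᵐ[P] μ1 ∧ μt0 =ᵐ[P] μ0)) :
    ∫ ω, (μt1 ω - μt0 ω + A ω * (Y ω - μt1 ω) / πt1 ω
        - (1 - A ω) * (Y ω - μt0 ω) / (1 - πt1 ω)) ∂P
      = ∫ ω, (μ1 ω - μ0 ω) ∂P :=
  aipw_double_robustness_general 𝓖X (mF := mF) P h𝓖X M hM A Y hA hAbin hYmeas hYbdd π1 μ1 μ0 hπ1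
    hoverlap hμ1 hμ0 πt1 μt1 μt0 hπt1meas hπt1b hμt1meas hμt0meas hμt1b hμt0b hdr
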